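/- arXiv:2101.00534 — 2 statements merged into one kernel-verified Lean document; each statement's English description precedes it below -/
import Mathlib

section
/- Let $0 < a < b < 1$. For every nonzero real $\alpha$ and for $p_{1,N}(n) = n/N^a$, $p_{2,N}(n) = n/N^b$, every non-trivial linear combination $\lambda_1 p_{1,N} + \lambda_2 p_{2,N}$ (with $(\lambda_1,\lambda_2) \neq (0,0)$) satisfies $\lim_{N\to\infty} \frac{1}{N}\sum_{n=1}^N e^{i(\lambda_1 p_{1,N}(n) + \lambda_2 p_{2,N}(n))\alpha} = 0$. -/
open Filter Finset Real Topology

/-! The phase is linear in `n`: it equals `n θ_N` with `θ_N = (l₁ N^{-a} + l₂ N^{-b}) α`.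
Summing the geometric series and using Jordan's inequality `|e^{iθ} - 1| ≥ 2|θ|/π` for `|θ| ≤ π`
bounds the average by `π / (N |θ_N|)`. Since `a, b > 0` we have `θ_N → 0`, and since `a < b < 1`
the quantity `N θ_N = α (l₁ N^{1-a} + l₂ N^{1-b})` is dominated by its leading nonzero term, so
`N |θ_N| → ∞`. -/

theorem norm_geom_sum_le_of_norm_le_one {K : Type*} [NormedField K] {z : K} (hz : ‖z‖ ≤ 1)
    (hz1 : z ≠ 1) (N : ℕ) : ‖∑ i ∈ range N, z ^ i‖ ≤ 2 / ‖z - 1‖ := by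
  rw [geom_sum_eq hz1, norm_div]
  gcongr
  calc ‖z ^ N - 1‖ ≤ ‖z ^ N‖ + ‖(1 : K)‖ := norm_sub_le _ _
    _ ≤ 1 + 1 := by
        rw [norm_pow, norm_one]
        gcongr
        exact pow_le_one₀ (norm_nonneg _) hz
    _ = 2 := one_add_one_eq_two

theorem norm_sum_exp_I_mul_le {θ : ℝ} (hθ : θ ≠ 0) (hθπ : |θ| ≤ π) (N : ℕ) :
    ‖∑ n ∈ Icc 1 N, Complex.exp (Complex.I * ((n * θ : ℝ) : ℂ))‖ ≤ π / |θ| := by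
  set z := Complex.exp (Complex.I * θ)
  have hz_sub_one : 2 / π * |θ| ≤ ‖z - 1‖ := by
    have jordan := mul_abs_le_abs_sin (x := θ / 2) (by rw [abs_div, abs_two]; linarith)
    rw [abs_div, abs_two] at jordan
    rw [Complex.norm_exp_I_mul_ofReal_sub_one, norm_mul, Real.norm_eq_abs, Real.norm_eq_abs,
      abs_two]
    linarith
  have hz1 : z ≠ 1 := by
    rintro hz
    rw [hz, sub_self, norm_zero] at hz_sub_one
    have : 0 < 2 / π * |θ| := by positivity
    linarith
  have hsum : ∑ n ∈ Icc 1 N, Complex.exp (Complex.I * ((n * θ : ℝ) : ℂ))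
      = z * ∑ i ∈ range N, z ^ i := by
    rw [← Ico_add_one_right_eq_Icc, sum_Ico_eq_sum_range, mul_sum, Nat.add_sub_cancel]
    refine sum_congr rfl fun i _ => ?_
    rw [← pow_succ', ← Complex.exp_nat_mul]
    push_cast
    ring_nf
  calc ‖∑ n ∈ Icc 1 N, Complex.exp (Complex.I * ((n * θ : ℝ) : ℂ))‖
      = ‖∑ i ∈ range N, z ^ i‖ := by
        rw [hsum, norm_mul, Complex.norm_exp_I_mul_ofReal, one_mul]
    _ ≤ 2 / ‖z - 1‖ := norm_geom_sum_le_of_norm_le_one (Complex.norm_exp_I_mul_ofReal θ).le hz1 N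
    _ ≤ 2 / (2 / π * |θ|) := by gcongr
    _ = π / |θ| := by field_simp

theorem tendsto_inv_mul_sum_exp_I_mul {θ : ℕ → ℝ} (hθ : Tendsto θ atTop (𝓝 0))
    (hNθ : Tendsto (fun N : ℕ => N * |θ N|) atTop atTop) :
    Tendsto (fun N : ℕ => (N : ℂ)⁻¹ *
      ∑ n ∈ Icc 1 N, Complex.exp (Complex.I * ((n * θ N : ℝ) : ℂ))) atTop (𝓝 0) := by
  refine squeeze_zero_norm' ?_ (tendsto_const_nhds.div_atTop hNθ : Tendsto (fun N => π / _) _ _)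
  have habs : Tendsto (fun N => |θ N|) atTop (𝓝 0) := by simpa using hθ.abs
  filter_upwards [habs.eventually_le_const pi_pos, hNθ.eventually_ge_atTop 1] with N hθπ hNθ1
  have hN : (0 : ℝ) < N := pos_of_mul_pos_left (one_pos.trans_le hNθ1) (abs_nonneg _)
  have hθN : θ N ≠ 0 := by
    rintro h
    rw [h, abs_zero, mul_zero] at hNθ1
    linarith
  calc ‖(N : ℂ)⁻¹ * ∑ n ∈ Icc 1 N, Complex.exp (Complex.I * ((n * θ N : ℝ) : ℂ))‖
      ≤ (N : ℝ)⁻¹ * (π / |θ N|) := by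
        rw [norm_mul, norm_inv, Complex.norm_natCast]
        gcongr
        exact norm_sum_exp_I_mul_le hθN hθπ N
    _ = π / (N * |θ N|) := by field_simp

theorem tendsto_abs_mul_rpow_add_mul_rpow_atTop {r s l₁ l₂ : ℝ} (hs : 0 < s) (hsr : s < r)
    (hl : l₁ ≠ 0 ∨ l₂ ≠ 0) :
    Tendsto (fun x : ℝ => |l₁ * x ^ r + l₂ * x ^ s|) atTop atTop := by
  rcases eq_or_ne l₁ 0 with rfl | hl₁
  · have hl₂ : l₂ ≠ 0 := hl.resolve_left (not_not.2 rfl)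
    refine ((tendsto_rpow_atTop hs).const_mul_atTop (abs_pos.2 hl₂)).congr' ?_
    filter_upwards [eventually_ge_atTop 0] with x hx
    rw [zero_mul, zero_add, abs_mul, abs_of_nonneg (rpow_nonneg hx s)]
  · have hsmall : Tendsto (fun x : ℝ => x ^ (s - r)) atTop (𝓝 0) := by
      simpa using tendsto_rpow_neg_atTop (sub_pos.2 hsr)
    have hlim : Tendsto (fun x : ℝ => |l₁ + l₂ * x ^ (s - r)|) atTop (𝓝 |l₁|) := by
      simpa using ((hsmall.const_mul l₂).const_add l₁).abs
    refine ((tendsto_rpow_atTop (hs.trans hsr)).atTop_mul_pos (abs_pos.2 hl₁) hlim).congr' ?_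
    filter_upwards [eventually_gt_atTop 0] with x hx
    have hxs : x ^ s = x ^ r * x ^ (s - r) := by rw [← rpow_add hx, add_sub_cancel]
    rw [hxs, show l₁ * x ^ r + l₂ * (x ^ r * x ^ (s - r)) = x ^ r * (l₁ + l₂ * x ^ (s - r)) by ring,
      abs_mul, abs_of_pos (rpow_pos_of_pos hx r)]

/-- For `0 < a < b < 1`, every non-trivial linear combination of the variable
polynomials `p_{1,N}(n) = n/N^a` and `p_{2,N}(n) = n/N^b` is a good polynomial sequence:
for every nonzero real `α`, `(1/N) ∑_{n=1}^N e^{i(λ₁ p_{1,N}(n) + λ₂ p_{2,N}(n))α} → 0`. -/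
theorem stmt1 (a b : ℝ) (ha : 0 < a) (hab : a < b) (hb : b < 1)
    (l1 l2 : ℝ) (hl : (l1, l2) ≠ (0, 0)) (α : ℝ) (hα : α ≠ 0) :
    Tendsto (fun N : ℕ => (N : ℂ)⁻¹ *
        ∑ n ∈ Finset.Icc 1 N, Complex.exp (Complex.I *
          (((l1 * ((n : ℝ) / (N : ℝ) ^ a) + l2 * ((n : ℝ) / (N : ℝ) ^ b)) * α : ℝ) : ℂ)))
      atTop (nhds 0) := by
  have hl' : l1 ≠ 0 ∨ l2 ≠ 0 := by
    contrapose! hl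
    rw [hl.1, hl.2]
  set θ : ℕ → ℝ := fun N => (l1 / (N : ℝ) ^ a + l2 / (N : ℝ) ^ b) * α with hθ_def
  have hpow {c : ℝ} (hc : 0 < c) : Tendsto (fun N : ℕ => (N : ℝ) ^ c) atTop atTop :=
    (tendsto_rpow_atTop hc).comp tendsto_natCast_atTop_atTop
  have hθ : Tendsto θ atTop (𝓝 0) := by
    simpa using ((tendsto_const_nhds.div_atTop (hpow ha)).add
      (tendsto_const_nhds.div_atTop (hpow (ha.trans hab)))).mul_const α
  have hNθ : Tendsto (fun N : ℕ => N * |θ N|) atTop atTop := by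
    have hlead := tendsto_abs_mul_rpow_add_mul_rpow_atTop (sub_pos.2 hb) (sub_lt_sub_left hab 1) hl'
    refine ((hlead.comp tendsto_natCast_atTop_atTop).const_mul_atTop (abs_pos.2 hα)).congr' ?_
    filter_upwards [eventually_gt_atTop 0] with N hN
    have hN' : (0 : ℝ) < N := Nat.cast_pos.2 hN
    have hNθ_eq : (N : ℝ) * θ N = α * (l1 * (N : ℝ) ^ (1 - a) + l2 * (N : ℝ) ^ (1 - b)) := by
      rw [rpow_sub hN', rpow_sub hN', rpow_one, hθ_def]
      ring
    rw [Function.comp_apply, ← abs_mul, ← hNθ_eq, abs_mul, abs_of_pos hN']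
  refine (tendsto_inv_mul_sum_exp_I_mul hθ hNθ).congr fun N => ?_
  congr 2 with n
  rw [hθ_def]
  congr 3
  ring
end

section
/- Let $(v_{N,n})_{N,n}$ be a bounded doubly-indexed sequence in a Hilbert space $H$. Then $\limsup_{N\to\infty} \left\| \frac{1}{N}\sum_{n=1}^N v_{N,n} \right\|^2 \leq 4 \limsup_{H_0\to\infty} \frac{1}{H_0}\sum_{h=1}^{H_0} \limsup_{N\to\infty} \left| \frac{1}{N}\sum_{n=1}^N \langle v_{N,n+h}, v_{N,n} \rangle \right|$. -/
/-!
Replacing `u n` by the window average `H⁻¹ ∑_{h<H} u (n + h)` changes `N⁻¹ ∑_{n<N} u n` by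
`O(H / N)`. By Cauchy–Schwarz the square of the averaged sum is at most the mean of the squared
window norms, and expanding these gives the correlations `∑_n ⟪u (n + h), u (n + h')⟫`. Up to a
boundary error `O(H)` each of them is the autocorrelation at lag `|h - h'|`, and every lag occurs
at most `2H` times among the `H²` pairs, so
`‖N⁻¹ ∑ u‖² ≤ 2C²/H + (2/H) ∑_{d=1}^{H} ‖N⁻¹ (autocorrelation at lag d)‖ + 6C²H/N`.
Let `N → ∞` for fixed `H`, then `H → ∞`.
-/

open Filter Finset Topology
open scoped InnerProductSpace

section NormedGroup
variable {M : Type*} [SeminormedAddCommGroup M]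

lemma norm_sum_range_le_of_le {F : ℕ → M} {K : ℝ} (hF : ∀ m, ‖F m‖ ≤ K) (N : ℕ) :
    ‖∑ n ∈ range N, F n‖ ≤ N * K := by
  simpa using norm_sum_le_of_le (range N) fun n _ => hF n

lemma norm_sum_range_shift_sub_le {F : ℕ → M} {K : ℝ} (hF : ∀ m, ‖F m‖ ≤ K) (a N : ℕ) :
    ‖∑ n ∈ range N, F (a + n) - ∑ n ∈ range N, F n‖ ≤ 2 * a * K := by
  have hshift : ∑ n ∈ range N, F (a + n) - ∑ n ∈ range N, F n
      = ∑ n ∈ range a, F (N + n) - ∑ n ∈ range a, F n := by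
    have := (sum_range_add F a N).symm.trans (add_comm a N ▸ sum_range_add F N a)
    rw [sub_eq_sub_iff_add_eq_add, add_comm, this, add_comm]
  rw [hshift]
  linarith [norm_sub_le (∑ n ∈ range a, F (N + n)) (∑ n ∈ range a, F n),
    norm_sum_range_le_of_le (fun n => hF (N + n)) a, norm_sum_range_le_of_le hF a]

lemma sq_norm_le_sq_norm_add {x y : M} {R : ℝ} (hx : ‖x‖ ≤ R) (hy : ‖y‖ ≤ R) :
    ‖x‖ ^ 2 ≤ ‖y‖ ^ 2 + 2 * R * ‖x - y‖ := by
  nlinarith [norm_sub_norm_le x y, norm_nonneg x, norm_nonneg y, norm_nonneg (x - y)]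

lemma sq_norm_sum_le_card_mul {ι : Type*} (s : Finset ι) (f : ι → M) :
    ‖∑ i ∈ s, f i‖ ^ 2 ≤ #s * ∑ i ∈ s, ‖f i‖ ^ 2 :=
  (pow_le_pow_left₀ (norm_nonneg _) (norm_sum_le s f) 2).trans (sq_sum_le_card_mul_sum_sq ..)

end NormedGroup

lemma sum_Icc_one_eq_sum_range {M : Type*} [AddCommMonoid M] (f : ℕ → M) (N : ℕ) :
    ∑ n ∈ Icc 1 N, f n = ∑ n ∈ range N, f (n + 1) := by
  rw [← Ico_add_one_right_eq_Icc, sum_Ico_eq_sum_range]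
  simp [add_comm]

lemma inv_mul_sum_Icc_le {f : ℕ → ℝ} {K : ℝ} {n : ℕ} (hK : 0 ≤ K)
    (hf : ∀ i ∈ Icc 1 n, f i ≤ K) : (n : ℝ)⁻¹ * ∑ i ∈ Icc 1 n, f i ≤ K := by
  rcases n.eq_zero_or_pos with rfl | hn
  · simpa using hK
  rw [inv_mul_le_iff₀ (by positivity)]
  simpa using sum_le_card_nsmul _ _ _ hf

lemma sum_range_le_add_sum_Icc {q : ℕ → ℝ} (hq : ∀ d, 0 ≤ q d) (H : ℕ) :
    ∑ d ∈ range H, q d ≤ q 0 + ∑ d ∈ Icc 1 H, q d :=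
  calc ∑ d ∈ range H, q d ≤ ∑ d ∈ range (H + 1), q d :=
        sum_le_sum_of_subset_of_nonneg (range_subset_range.2 H.le_succ) fun d _ _ => hq d
    _ = q 0 + ∑ d ∈ Icc 1 H, q d := by
        rw [sum_range_succ', sum_Icc_one_eq_sum_range, add_comm]

lemma card_filter_dist_eq_le_two (s : Finset ℕ) (h d : ℕ) :
    #{h' ∈ s | Nat.dist h h' = d} ≤ 2 := by
  refine (card_le_card fun h' hh' => ?_).trans (card_le_two (a := h + d) (b := h - d))
  have hd := (mem_filter.1 hh').2
  unfold Nat.dist at hd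
  simp only [mem_insert, mem_singleton]
  omega

lemma sum_range_dist_le {q : ℕ → ℝ} (hq : ∀ d, 0 ≤ q d) {h H : ℕ} (hh : h < H) :
    ∑ h' ∈ range H, q (Nat.dist h h') ≤ 2 * ∑ d ∈ range H, q d := by
  have hmaps : ∀ h' ∈ range H, Nat.dist h h' ∈ range H := by
    intro h' hh'
    simp only [mem_range, Nat.dist] at hh' ⊢
    omega
  rw [← sum_fiberwise_of_maps_to' hmaps, mul_sum]
  refine sum_le_sum fun d _ => ?_
  rw [sum_const, nsmul_eq_mul]
  exact mul_le_mul_of_nonneg_right (by exact_mod_cast card_filter_dist_eq_le_two _ h d) (hq d)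

section InnerProduct
variable {𝕜 E : Type*} [RCLike 𝕜] [SeminormedAddCommGroup E] [InnerProductSpace 𝕜 E]
  {u : ℕ → E} {C : ℝ}

variable (𝕜) in
def autocorr (u : ℕ → E) (N d : ℕ) : 𝕜 := ∑ n ∈ range N, ⟪u (n + d), u n⟫_𝕜

lemma norm_inner_le_sq (hu : ∀ n, ‖u n‖ ≤ C) (m k : ℕ) : ‖⟪u m, u k⟫_𝕜‖ ≤ C ^ 2 :=
  (norm_inner_le_norm _ _).trans <| by
    nlinarith [hu m, hu k, norm_nonneg (u m), norm_nonneg (u k)]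

lemma norm_sum_inner_le_autocorr_dist (hu : ∀ n, ‖u n‖ ≤ C) (N h h' : ℕ) :
    ‖∑ n ∈ range N, ⟪u (n + h), u (n + h')⟫_𝕜‖
      ≤ ‖autocorr 𝕜 u N (Nat.dist h h')‖ + 2 * min h h' * C ^ 2 := by
  wlog hle : h' ≤ h generalizing h h'
  · calc ‖∑ n ∈ range N, ⟪u (n + h), u (n + h')⟫_𝕜‖
          = ‖∑ n ∈ range N, ⟪u (n + h'), u (n + h)⟫_𝕜‖ := by
            rw [← RCLike.norm_conj, map_sum]
            simp only [inner_conj_symm]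
        _ ≤ _ := this h' h (by omega)
        _ = _ := by rw [Nat.dist_comm, min_comm]
  set d := Nat.dist h h'
  have hd : d = h - h' := Nat.dist_eq_sub_of_le_right hle
  have hshift : ∀ n, ⟪u (n + h), u (n + h')⟫_𝕜 = ⟪u (h' + n + d), u (h' + n)⟫_𝕜 := by
    intro n
    congr 2 <;> omega
  simp only [hshift, min_eq_right hle, autocorr]
  linarith [norm_sub_norm_le (∑ n ∈ range N, ⟪u (h' + n + d), u (h' + n)⟫_𝕜)
      (∑ n ∈ range N, ⟪u (n + d), u n⟫_𝕜),
    norm_sum_range_shift_sub_le (F := fun m => ⟪u (m + d), u m⟫_𝕜)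
      (fun m => norm_inner_le_sq hu (m + d) m) h' N]

lemma sum_sq_norm_sum_window_le (hu : ∀ n, ‖u n‖ ≤ C) (N H : ℕ) :
    ∑ n ∈ range N, ‖∑ h ∈ range H, u (n + h)‖ ^ 2
      ≤ 2 * H * ∑ d ∈ range H, ‖autocorr 𝕜 u N d‖ + 2 * H ^ 3 * C ^ 2 := by
  have hexpand : ∑ n ∈ range N, ‖∑ h ∈ range H, u (n + h)‖ ^ 2
      = RCLike.re (∑ h ∈ range H, ∑ h' ∈ range H,
          ∑ n ∈ range N, ⟪u (n + h), u (n + h')⟫_𝕜) := by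
    simp_rw [norm_sq_eq_re_inner (𝕜 := 𝕜), sum_inner, inner_sum, map_sum]
    rw [sum_comm]
    exact sum_congr rfl fun h _ => sum_comm
  calc ∑ n ∈ range N, ‖∑ h ∈ range H, u (n + h)‖ ^ 2
      ≤ ∑ h ∈ range H, ∑ h' ∈ range H, ‖∑ n ∈ range N, ⟪u (n + h), u (n + h')⟫_𝕜‖ := by
        rw [hexpand]
        exact (RCLike.re_le_norm _).trans
          ((norm_sum_le _ _).trans (sum_le_sum fun h _ => norm_sum_le _ _))
    _ ≤ ∑ h ∈ range H, ∑ h' ∈ range H,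
          (‖autocorr 𝕜 u N (Nat.dist h h')‖ + 2 * H * C ^ 2) := by
        refine sum_le_sum fun h _ => sum_le_sum fun h' hh' => ?_
        refine (norm_sum_inner_le_autocorr_dist hu N h h').trans ?_
        have : ((min h h' : ℕ) : ℝ) ≤ H := by
          exact_mod_cast (min_le_right h h').trans (mem_range.1 hh').le
        gcongr
    _ ≤ ∑ h ∈ range H, (2 * ∑ d ∈ range H, ‖autocorr 𝕜 u N d‖ + H * (2 * H * C ^ 2)) := by
        refine sum_le_sum fun h hh => ?_
        rw [sum_add_distrib, sum_const, card_range, nsmul_eq_mul]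
        gcongr
        exact sum_range_dist_le (fun d => norm_nonneg _) (mem_range.1 hh)
    _ = 2 * H * ∑ d ∈ range H, ‖autocorr 𝕜 u N d‖ + 2 * H ^ 3 * C ^ 2 := by
        rw [sum_const, card_range, nsmul_eq_mul]
        ring

lemma norm_natCast_smul_sum_sub_sum_window_le (hu : ∀ n, ‖u n‖ ≤ C) (N H : ℕ) :
    ‖(H : 𝕜) • ∑ n ∈ range N, u n - ∑ n ∈ range N, ∑ h ∈ range H, u (n + h)‖
      ≤ 2 * H ^ 2 * C := by
  have hsplit : ∑ n ∈ range N, ∑ h ∈ range H, u (n + h) - (H : 𝕜) • ∑ n ∈ range N, u n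
      = ∑ h ∈ range H, (∑ n ∈ range N, u (h + n) - ∑ n ∈ range N, u n) := by
    rw [sum_sub_distrib, sum_const, card_range, Nat.cast_smul_eq_nsmul, sum_comm]
    simp only [add_comm]
  rw [norm_sub_rev, hsplit]
  calc ‖∑ h ∈ range H, (∑ n ∈ range N, u (h + n) - ∑ n ∈ range N, u n)‖
      ≤ ∑ h ∈ range H, 2 * (H : ℝ) * C := by
        refine norm_sum_le_of_le _ fun h hh => (norm_sum_range_shift_sub_le hu h N).trans ?_
        have : (h : ℝ) ≤ H := by exact_mod_cast (mem_range.1 hh).le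
        have hC : 0 ≤ C := (norm_nonneg _).trans (hu 0)
        gcongr
    _ = 2 * H ^ 2 * C := by
        rw [sum_const, card_range, nsmul_eq_mul]
        ring

lemma sq_mul_sq_norm_sum_le (hu : ∀ n, ‖u n‖ ≤ C) (N H : ℕ) :
    (H : ℝ) ^ 2 * ‖∑ n ∈ range N, u n‖ ^ 2
      ≤ 2 * N ^ 2 * H * C ^ 2 + 2 * N * H * ∑ d ∈ Icc 1 H, ‖autocorr 𝕜 u N d‖
        + 6 * N * H ^ 3 * C ^ 2 := by
  have hC : 0 ≤ C := (norm_nonneg _).trans (hu 0)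
  set S := ∑ n ∈ range N, u n
  set W := ∑ n ∈ range N, ∑ h ∈ range H, u (n + h)
  have hS : ‖(H : 𝕜) • S‖ ≤ N * H * C := by
    rw [norm_smul, RCLike.norm_natCast]
    nlinarith [norm_sum_range_le_of_le hu N]
  have hW : ‖W‖ ≤ N * H * C := by
    rw [mul_assoc]
    exact norm_sum_range_le_of_le (fun n => norm_sum_range_le_of_le (fun h => hu (n + h)) H) N
  have hW2 : ‖W‖ ^ 2 ≤ N * (2 * H * (N * C ^ 2 + ∑ d ∈ Icc 1 H, ‖autocorr 𝕜 u N d‖)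
      + 2 * H ^ 3 * C ^ 2) := by
    have hq0 : ‖autocorr 𝕜 u N 0‖ ≤ N * C ^ 2 :=
      norm_sum_range_le_of_le (fun n => norm_inner_le_sq hu (n + 0) n) N
    refine (sq_norm_sum_le_card_mul (range N) _).trans ?_
    rw [card_range]
    gcongr
    refine (sum_sq_norm_sum_window_le (𝕜 := 𝕜) hu N H).trans ?_
    gcongr
    exact (sum_range_le_add_sum_Icc (fun d => norm_nonneg _) H).trans (by gcongr)
  have hSq := sq_norm_le_sq_norm_add hS hW
  rw [norm_smul, RCLike.norm_natCast, mul_pow] at hSq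
  calc (H : ℝ) ^ 2 * ‖S‖ ^ 2 ≤ ‖W‖ ^ 2 + 2 * (N * H * C) * (2 * H ^ 2 * C) := by
        refine hSq.trans ?_
        gcongr
        exact norm_natCast_smul_sum_sub_sum_window_le hu N H
    _ ≤ _ := by linarith

lemma sq_norm_sum_Icc_div_le (hu : ∀ n, ‖u n‖ ≤ C) {N H : ℕ} (hN : 0 < N) (hH : 0 < H) :
    ‖∑ n ∈ Icc 1 N, u n‖ ^ 2 / N ^ 2
      ≤ 2 * C ^ 2 / H
        + 2 / H * ∑ d ∈ Icc 1 H, ‖(N : 𝕜)⁻¹ * ∑ n ∈ Icc 1 N, ⟪u (n + d), u n⟫_𝕜‖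
        + 6 * C ^ 2 * H / N := by
  have key := sq_mul_sq_norm_sum_le (𝕜 := 𝕜) (u := fun n => u (n + 1)) (fun n => hu _) N H
  have hcorr : ∀ d, ‖(N : 𝕜)⁻¹ * ∑ n ∈ Icc 1 N, ⟪u (n + d), u n⟫_𝕜‖
      = ‖autocorr 𝕜 (fun n => u (n + 1)) N d‖ / N := by
    intro d
    rw [norm_mul, norm_inv, RCLike.norm_natCast, sum_Icc_one_eq_sum_range, autocorr,
      inv_mul_eq_div]
    simp only [add_right_comm]
  rw [← sum_Icc_one_eq_sum_range] at key
  simp only [hcorr, ← sum_div]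
  have hH' : (0 : ℝ) < H := by exact_mod_cast hH
  rw [div_le_iff₀ (by positivity)]
  field_simp
  exact le_of_mul_le_mul_left (by linarith) hH'

lemma norm_inv_mul_sum_Icc_inner_le (hu : ∀ n, ‖u n‖ ≤ C) (N d : ℕ) :
    ‖(N : 𝕜)⁻¹ * ∑ n ∈ Icc 1 N, ⟪u (n + d), u n⟫_𝕜‖ ≤ C ^ 2 := by
  rw [norm_mul, norm_inv, RCLike.norm_natCast]
  exact (mul_le_mul_of_nonneg_left (norm_sum_le _ _) (by positivity)).trans
    (inv_mul_sum_Icc_le (sq_nonneg C) fun n _ => norm_inner_le_sq hu _ _)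

end InnerProduct

section Limsup
variable {α ι : Type*} {l : Filter α} [l.NeBot]

lemma limsup_le_add_mul_sum_limsup {a e : α → ℝ} {c : ι → α → ℝ} {s : Finset ι} {b w : ℝ}
    (hw : 0 ≤ w) (he : Tendsto e l (𝓝 0)) (ha : IsBoundedUnder (· ≥ ·) l a)
    (hc : ∀ i ∈ s, IsBoundedUnder (· ≤ ·) l (c i))
    (h : ∀ᶠ x in l, a x ≤ b + w * ∑ i ∈ s, c i x + e x) :
    limsup a l ≤ b + w * ∑ i ∈ s, limsup (c i) l := by
  have hlim : Tendsto (fun ε => b + w * ∑ i ∈ s, (limsup (c i) l + ε) + ε) (𝓝[>] 0)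
      (𝓝 (b + w * ∑ i ∈ s, limsup (c i) l)) :=
    tendsto_nhdsWithin_of_tendsto_nhds <| by
      simpa using (show Continuous fun ε : ℝ => b + w * ∑ i ∈ s, (limsup (c i) l + ε) + ε by
        fun_prop).tendsto 0
  refine ge_of_tendsto hlim (eventually_nhdsWithin_of_forall fun ε (hε : 0 < ε) => ?_)
  refine limsup_le_of_le ha.isCoboundedUnder_le ?_
  have hc' : ∀ᶠ x in l, ∀ i ∈ s, c i x ≤ limsup (c i) l + ε :=
    (eventually_all_finset s).2 fun i hi =>
      (eventually_lt_of_limsup_lt (lt_add_of_pos_right _ hε) (hc i hi)).mono fun _ => le_of_lt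
  filter_upwards [h, hc', he.eventually (ge_mem_nhds hε)] with x hx hcx hex
  refine hx.trans ?_
  gcongr
  exact hcx _ ‹_›

lemma le_mul_limsup_of_eventually_le_add {x w : ℝ} {e S : α → ℝ} (hw : 0 ≤ w)
    (he : Tendsto e l (𝓝 0)) (hS : IsBoundedUnder (· ≤ ·) l S)
    (h : ∀ᶠ y in l, x ≤ e y + w * S y) :
    x ≤ w * limsup S l := by
  have hlim : Tendsto (fun ε => ε + w * (limsup S l + ε)) (𝓝[>] 0) (𝓝 (w * limsup S l)) :=
    tendsto_nhdsWithin_of_tendsto_nhds <| by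
      simpa using (show Continuous fun ε : ℝ => ε + w * (limsup S l + ε) by fun_prop).tendsto 0
  refine ge_of_tendsto hlim (eventually_nhdsWithin_of_forall fun ε (hε : 0 < ε) => ?_)
  obtain ⟨y, hy, hey, hSy⟩ := (h.and ((he.eventually (ge_mem_nhds hε)).and
    (eventually_lt_of_limsup_lt (lt_add_of_pos_right _ hε) hS))).exists
  calc x ≤ e y + w * S y := hy
    _ ≤ ε + w * (limsup S l + ε) := by gcongr

end Limsup

/-- variable van der Corput lemma: for a bounded doubly-indexed sequence
`v` in a Hilbert space,
`limsup_N ‖(1/N)∑_{n=1}^N v_{N,n}‖² ≤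
  4 limsup_{H₀} (1/H₀)∑_{h=1}^{H₀} limsup_N |(1/N)∑_{n=1}^N ⟨v_{N,n+h}, v_{N,n}⟩|`. -/
theorem stmt3 {E : Type*} [NormedAddCommGroup E] [InnerProductSpace ℂ E]
    (v : ℕ → ℕ → E) (C : ℝ) (hv : ∀ N n, ‖v N n‖ ≤ C) :
    Filter.atTop.limsup (fun N : ℕ => ‖(N : ℝ)⁻¹ • ∑ n ∈ Finset.Icc 1 N, v N n‖ ^ 2) ≤
      4 * Filter.atTop.limsup (fun H0 : ℕ => (H0 : ℝ)⁻¹ *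
        ∑ h ∈ Finset.Icc 1 H0, Filter.atTop.limsup (fun N : ℕ =>
          ‖(N : ℂ)⁻¹ *
            ∑ n ∈ Finset.Icc 1 N, (inner ℂ (v N (n + h)) (v N n) : ℂ)‖)) := by
  set c : ℕ → ℕ → ℝ := fun h N => ‖(N : ℂ)⁻¹ * ∑ n ∈ Icc 1 N, ⟪v N (n + h), v N n⟫_ℂ‖
  set S : ℕ → ℝ := fun H => (H : ℝ)⁻¹ * ∑ h ∈ Icc 1 H, limsup (c h) atTop
  have hc_bdd (h : ℕ) : IsBoundedUnder (· ≤ ·) atTop (c h) :=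
    isBoundedUnder_of ⟨C ^ 2, fun N => norm_inv_mul_sum_Icc_inner_le (hv N) N h⟩
  have hS_nonneg (H : ℕ) : 0 ≤ S H :=
    mul_nonneg (by positivity) (sum_nonneg fun h _ =>
      le_limsup_of_frequently_le (Frequently.of_forall fun _ => norm_nonneg _) (hc_bdd h))
  have hS_bdd : IsBoundedUnder (· ≤ ·) atTop S :=
    isBoundedUnder_of ⟨C ^ 2, fun H => inv_mul_sum_Icc_le (sq_nonneg C) fun h _ =>
      limsup_le_of_le (isCoboundedUnder_le_of_le atTop fun _ => norm_nonneg _)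
        (Eventually.of_forall fun N => norm_inv_mul_sum_Icc_inner_le (hv N) N h)⟩
  have hfixed_H (H : ℕ) (hH : 0 < H) :
      limsup (fun N : ℕ => ‖(N : ℝ)⁻¹ • ∑ n ∈ Icc 1 N, v N n‖ ^ 2) atTop
        ≤ 2 * C ^ 2 / H + 2 * S H := by
    refine (limsup_le_add_mul_sum_limsup (s := Icc 1 H) (b := 2 * C ^ 2 / H) (w := 2 / H)
      (by positivity) (tendsto_const_div_atTop_nhds_zero_nat (6 * C ^ 2 * H))
      (isBoundedUnder_of ⟨0, fun _ => by positivity⟩) (fun h _ => hc_bdd h)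
      ((eventually_gt_atTop 0).mono fun N hN => ?_)).trans_eq (by simp only [S]; ring)
    rw [norm_smul, mul_pow, norm_inv, Real.norm_natCast, inv_pow, inv_mul_eq_div]
    exact sq_norm_sum_Icc_div_le (hv N) hN hH
  have := le_mul_limsup_of_eventually_le_add zero_le_two
    (tendsto_const_div_atTop_nhds_zero_nat (2 * C ^ 2)) hS_bdd
    ((eventually_gt_atTop 0).mono hfixed_H)
  linarith [le_limsup_of_frequently_le (Frequently.of_forall hS_nonneg) hS_bdd]
end
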